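/- For the left-composition matrix Q_L(x) associated to x ∈ M (with rows [[x₀,-x₁,0,0],[x₁,x₀,0,0],[x₂,x₃,x₀,-x₁],[x₃,-x₂,x₁,x₀]]), the spectral norm satisfies ‖Q_L(x)‖₂ ≤ ‖x‖₂ + √2, where ‖x‖₂ = √(x₀²+x₁²+x₂²+x₃²). -/

import Mathlib

open Matrix

/-- Left-composition matrix `Q_L(x)` of a planar unit dual quaternion. -/
noncomputable def QL (x : Fin 4 → ℝ) : Matrix (Fin 4) (Fin 4) ℝ :=
  !![x 0, -x 1, 0, 0;
     x 1,  x 0, 0, 0;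
     x 2,  x 3, x 0, -x 1;
     x 3, -x 2, x 1,  x 0]

/-!
`Q_L(x)` splits as `R + N`, where `R` carries the rotation `(x₀, x₁)` twice along the diagonal and
`N` carries the translation `(x₂, x₃)` in its lower left block. Both `Rᴴ R` and `Nᴴ N` are
diagonal, so the C⋆-identity `‖M‖² = ‖Mᴴ M‖` gives `‖R‖ = √(x₀² + x₁²) = 1` and
`‖N‖ ≤ √(x₂² + x₃²)`; the triangle inequality finishes.
-/

open scoped Matrix.Norms.L2Operator

namespace Matrix

theorem l2_opNorm_le_sqrt_of_conjTranspose_mul_self_eq_diagonal {𝕜 m n : Type*} [RCLike 𝕜]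
    [Fintype m] [Fintype n] [DecidableEq n] {A : Matrix m n 𝕜} {d : n → 𝕜} {c : ℝ}
    (hA : Aᴴ * A = diagonal d) (hd : ∀ i, ‖d i‖ ≤ c) : ‖A‖ ≤ √c := by
  obtain hn | hn := isEmpty_or_nonempty n
  · simp [Subsingleton.elim A 0]
  · rw [← Real.sqrt_mul_self (norm_nonneg A), ← l2_opNorm_conjTranspose_mul_self, hA,
      l2_opNorm_diagonal]
    exact Real.sqrt_le_sqrt ((pi_norm_le_iff_of_nonempty d).2 hd)

end Matrix

noncomputable def QLRot (x : Fin 4 → ℝ) : Matrix (Fin 4) (Fin 4) ℝ :=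
  !![x 0, -x 1, 0, 0;
     x 1,  x 0, 0, 0;
     0,    0,   x 0, -x 1;
     0,    0,   x 1,  x 0]

noncomputable def QLDual (x : Fin 4 → ℝ) : Matrix (Fin 4) (Fin 4) ℝ :=
  !![0,    0,   0, 0;
     0,    0,   0, 0;
     x 2,  x 3, 0, 0;
     x 3, -x 2, 0, 0]

theorem QL_eq_QLRot_add_QLDual (x : Fin 4 → ℝ) : QL x = QLRot x + QLDual x := by
  ext i j
  fin_cases i <;> fin_cases j <;> simp [QL, QLRot, QLDual]

theorem conjTranspose_QLRot_mul_self (x : Fin 4 → ℝ) :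
    (QLRot x)ᴴ * QLRot x = diagonal fun _ => x 0 ^ 2 + x 1 ^ 2 := by
  ext i j
  fin_cases i <;> fin_cases j <;> simp [QLRot, mul_apply, Fin.sum_univ_four] <;> ring

theorem conjTranspose_QLDual_mul_self (x : Fin 4 → ℝ) :
    (QLDual x)ᴴ * QLDual x = diagonal ![x 2 ^ 2 + x 3 ^ 2, x 2 ^ 2 + x 3 ^ 2, 0, 0] := by
  ext i j
  fin_cases i <;> fin_cases j <;> simp [QLDual, mul_apply, Fin.sum_univ_four] <;> ring

theorem l2_opNorm_QLRot_le (x : Fin 4 → ℝ) : ‖QLRot x‖ ≤ √(x 0 ^ 2 + x 1 ^ 2) :=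
  l2_opNorm_le_sqrt_of_conjTranspose_mul_self_eq_diagonal (conjTranspose_QLRot_mul_self x)
    fun _ => (Real.norm_of_nonneg (by positivity)).le

theorem l2_opNorm_QLDual_le (x : Fin 4 → ℝ) : ‖QLDual x‖ ≤ √(x 2 ^ 2 + x 3 ^ 2) := by
  refine l2_opNorm_le_sqrt_of_conjTranspose_mul_self_eq_diagonal
    (conjTranspose_QLDual_mul_self x) fun i => ?_
  fin_cases i <;> simp [abs_of_nonneg, add_nonneg, sq_nonneg]

theorem l2_opNorm_QL_le (x : Fin 4 → ℝ) :
    ‖QL x‖ ≤ √(x 0 ^ 2 + x 1 ^ 2) + √(x 2 ^ 2 + x 3 ^ 2) := by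
  rw [QL_eq_QLRot_add_QLDual]
  exact (norm_add_le _ _).trans (add_le_add (l2_opNorm_QLRot_le x) (l2_opNorm_QLDual_le x))

theorem QL_spectral_norm_le (x : Fin 4 → ℝ) (hx : x 0 ^ 2 + x 1 ^ 2 = 1) :
    ‖Matrix.toEuclideanCLM (𝕜 := ℝ) (QL x)‖ ≤
      Real.sqrt (x 0 ^ 2 + x 1 ^ 2 + x 2 ^ 2 + x 3 ^ 2) + Real.sqrt 2 := by
  rw [← cstar_norm_def]
  refine (l2_opNorm_QL_le x).trans ?_
  rw [add_comm]
  gcongr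
  · linarith
  · linarith [sq_nonneg (x 0), sq_nonneg (x 1)]
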